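/- arXiv:2106.13287 — 3 statements merged into one kernel-verified Lean document; each statement's English description precedes it below -/
import Mathlib

section
/- The polynomial -X^5 - 2X^4 + 5X^3 + 2X^2 - 4X + 1 splits into linear factors over the cyclotomic field Q(ζ_11), and all of its complex roots are real. -/
open Polynomial

noncomputable def quinticPoly : Polynomial ℚ :=
  -X ^ 5 - 2 * X ^ 4 + 5 * X ^ 3 + 2 * X ^ 2 - 4 * X + 1

/-!
For a primitive 11th root of unity `ζ`, the relation `1 + ζ + ⋯ + ζ¹⁰ = 0` turns `quinticPoly`
into `-∏ₖ ((1 + ζᵏ + ζ¹¹⁻ᵏ) X - 1)`, `k = 1, …, 5`, so its roots `1 / (1 + ζᵏ + ζ¹¹⁻ᵏ)` lie in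
`ℚ(ζ)`. In `ℂ`, with `ζ = exp (2πi/11)`, the number `ζᵏ + ζ¹¹⁻ᵏ = 2 cos (2πk/11)` is real, hence
so are the roots.
-/

open Finset

section Factorization

variable {R : Type*} [CommRing R]

theorem quintic_eq_neg_prod_of_geom_sum_eq_zero {ζ : R} (hζ : ∑ i ∈ range 11, ζ ^ i = 0)
    (x : R) :
    -x ^ 5 - 2 * x ^ 4 + 5 * x ^ 3 + 2 * x ^ 2 - 4 * x + 1 =
      -∏ k ∈ Icc 1 5, ((1 + ζ ^ k + ζ ^ (11 - k)) * x - 1) := by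
  simp only [sum_range_succ, sum_range_zero] at hζ
  simp only [Nat.reduceAdd, Nat.one_le_ofNat, prod_Icc_succ_top, Icc_self, prod_singleton]
  -- the coefficient is the quotient of the difference of the two sides by `1 + ζ + ⋯ + ζ¹⁰`
  linear_combination (x
    + (-8 + 4*ζ - ζ^3 - ζ^5 - ζ^7 - ζ^9) * x ^ 2
    + (15 - 9*ζ + 3*ζ^3 + 3*ζ^5 + ζ^6 + 3*ζ^7 + ζ^8 + 4*ζ^9 + ζ^10 - 2*ζ^11 + ζ^12 + ζ^13
        + ζ^14 + ζ^15 + ζ^17) * x ^ 3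
    + (-7 + 3*ζ - 3*ζ^3 - 3*ζ^5 - 2*ζ^6 - 3*ζ^7 - 2*ζ^8 - 5*ζ^9 - 3*ζ^10 + 7*ζ^11 - 6*ζ^12
        - 3*ζ^13 - ζ^14 - 3*ζ^15 - 3*ζ^17 - ζ^19 + ζ^20 - ζ^21 - ζ^22 - ζ^24) * x ^ 4
    + (ζ + ζ^3 + ζ^5 + ζ^6 + ζ^7 + ζ^8 + 2*ζ^9 + 2*ζ^10 - 4*ζ^11 + 4*ζ^12 + 2*ζ^13 + 3*ζ^15
        + ζ^17 + ζ^18 + ζ^19 - ζ^20 + ζ^21 + 2*ζ^22 + ζ^24 + ζ^27 - ζ^28 + ζ^30) * x ^ 5) * hζ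

theorem map_quinticPoly_eq_neg_prod [Algebra ℚ R] {ζ : R} (hζ : ∑ i ∈ range 11, ζ ^ i = 0) :
    quinticPoly.map (algebraMap ℚ R) = -∏ k ∈ Icc 1 5, (C (1 + ζ ^ k + ζ ^ (11 - k)) * X - 1) := by
  have hCζ : ∑ i ∈ range 11, C ζ ^ i = 0 := by
    simpa only [map_sum, map_pow, map_zero] using congrArg C hζ
  simpa [quinticPoly] using quintic_eq_neg_prod_of_geom_sum_eq_zero hCζ X

end Factorization

theorem splits_map_quinticPoly {K : Type*} [Field K] [Algebra ℚ K] {ζ : K}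
    (hζ : IsPrimitiveRoot ζ 11) : Splits (quinticPoly.map (algebraMap ℚ K)) := by
  rw [map_quinticPoly_eq_neg_prod (hζ.geom_sum_eq_zero (by norm_num))]
  exact (Splits.prod fun k _ => Splits.of_natDegree_le_one (by compute_degree)).neg

namespace Complex

open ComplexConjugate

theorem im_pow_add_pow_sub_eq_zero {ζ : ℂ} {n : ℕ} (hζ : IsPrimitiveRoot ζ n) (hn : n ≠ 0)
    {k : ℕ} (hk : k ≤ n) : (ζ ^ k + ζ ^ (n - k)).im = 0 := by
  have hζk : ‖ζ ^ k‖ = 1 := by rw [norm_pow, hζ.norm'_eq_one hn, one_pow]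
  have hconj : ζ ^ (n - k) = conj (ζ ^ k) := by
    rw [pow_sub₀ ζ (hζ.ne_zero hn) hk, hζ.pow_eq_one, one_mul, inv_eq_conj hζk]
  rw [hconj, add_conj, ofReal_im]

theorem im_eq_zero_of_mul_eq_one {c z : ℂ} (hc : c.im = 0) (h : c * z = 1) : z.im = 0 := by
  rw [eq_inv_of_mul_eq_one_right h, inv_im, hc, neg_zero, zero_div]

theorem im_eq_zero_of_aeval_quinticPoly_eq_zero {z : ℂ} (hz : aeval z quinticPoly = 0) :
    z.im = 0 := by
  have hζ : IsPrimitiveRoot (exp (2 * Real.pi * I / 11)) 11 := isPrimitiveRoot_exp 11 (by norm_num)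
  rw [aeval_def, eval₂_eq_eval_map, map_quinticPoly_eq_neg_prod (hζ.geom_sum_eq_zero (by norm_num)),
    eval_neg, eval_prod, neg_eq_zero, prod_eq_zero_iff] at hz
  obtain ⟨k, hk, hzk⟩ := hz
  rw [eval_sub, eval_mul, eval_C, eval_X, eval_one, sub_eq_zero] at hzk
  refine im_eq_zero_of_mul_eq_one ?_ hzk
  rw [add_assoc, add_im, one_im, im_pow_add_pow_sub_eq_zero hζ (by norm_num) (by grind), add_zero]

end Complex

theorem quintic_splits_real :
    Polynomial.Splits (quinticPoly.map (algebraMap ℚ (CyclotomicField 11 ℚ))) ∧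
    ∀ z : ℂ, Polynomial.aeval z quinticPoly = 0 → z.im = 0 := by
  obtain ⟨ζ, hζ⟩ := (CyclotomicField.isCyclotomicExtension 11 ℚ).exists_isPrimitiveRoot
    (Set.mem_singleton 11) (by norm_num)
  exact ⟨splits_map_quinticPoly hζ,
    fun _ => Complex.im_eq_zero_of_aeval_quinticPoly_eq_zero⟩
end

section
/- Let L be an even lattice of rank 2 that is positive definite with determinant 11. Then L is isomorphic to the lattice with Gram matrix [[2,1],[1,6]]. -/
open Matrix

lemma conj_fin_two (p q r s a b c : ℤ) :
    (!![p,q;r,s])ᵀ * !![2*a,b;b,2*c] * !![p,q;r,s] =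
    !![2*(a*p^2+b*p*r+c*r^2), 2*a*p*q+b*p*s+b*q*r+2*c*r*s;
       2*a*p*q+b*p*s+b*q*r+2*c*r*s, 2*(a*q^2+b*q*s+c*s^2)] := by
  have htr : (!![p,q;r,s])ᵀ = !![p,r;q,s] := by
    ext i j; fin_cases i <;> fin_cases j <;> simp
  rw [htr, Matrix.mul_fin_two, Matrix.mul_fin_two]
  ext i j; fin_cases i <;> fin_cases j <;> simp <;> ring

lemma comp_conj (G G' T S V : Matrix (Fin 2) (Fin 2) ℤ)
    (h : Sᵀ * G * S = G') (h2 : Vᵀ * G' * V = T) :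
    (S * V)ᵀ * G * (S * V) = T := by
  rw [Matrix.transpose_mul, ← h2, ← h]
  simp [Matrix.mul_assoc]

lemma key : ∀ n : ℕ, ∀ a b c : ℤ, (2*a + c).toNat ≤ n → 0 < a → 0 < c →
    4*a*c - b^2 = 11 →
    ∃ U : Matrix (Fin 2) (Fin 2) ℤ, IsUnit U.det ∧
      Uᵀ * !![2*a,b;b,2*c] * U = !![2,1;1,6] := by
  intro n
  induction n using Nat.strong_induction_on with
  | _ n ih =>
  intro a b c hm ha hc hd
  by_cases hbase : b^2 ≤ a^2 ∧ a ≤ c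
  · -- reduced form
    have ha1 : a = 1 := by nlinarith [hbase.1, hbase.2]
    subst ha1
    have hb1 : -1 ≤ b := by nlinarith [hbase.1]
    have hb2 : b ≤ 1 := by nlinarith [hbase.1]
    interval_cases b
    · -- b = -1
      have hc3 : c = 3 := by nlinarith
      subst hc3
      refine ⟨!![1,0;0,-1], ?_, ?_⟩
      · simp [Matrix.det_fin_two_of]
      · have := conj_fin_two 1 0 0 (-1) 1 (-1) 3
        norm_num at this ⊢
        convert this using 2
    · exfalso; omega
    · -- b = 1
      have hc3 : c = 3 := by nlinarith
      subst hc3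
      exact ⟨1, isUnit_one, by norm_num⟩
  · by_cases hac : a ≤ c
    · -- then b^2 > a^2 : translate
      have hb2 : a^2 < b^2 := by
        rcases lt_or_ge (a^2) (b^2) with h|h
        · exact h
        · exact absurd ⟨h, hac⟩ hbase
      set t : ℤ := -((b + a) / (2*a)) with ht
      set b' : ℤ := b + 2*a*t with hb'
      have hmod : b' = (b + a) % (2*a) - a := by
        rw [hb', ht, Int.emod_def]; ring
      have h2a : (0:ℤ) < 2*a := by omega
      have hr1 : 0 ≤ (b + a) % (2*a) := Int.emod_nonneg _ (by omega)
      have hr2 : (b + a) % (2*a) < 2*a := Int.emod_lt_of_pos _ h2a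
      have hb'range : -a ≤ b' ∧ b' < a := by omega
      set c' : ℤ := a*t^2 + b*t + c with hc'
      have hdet' : 4*a*c' - b'^2 = 11 := by rw [hc', hb']; ring_nf; ring_nf at hd; linarith
      have hb'sq : b'^2 ≤ a^2 := by nlinarith [hb'range.1, hb'range.2]
      have hc'pos : 0 < c' := by nlinarith
      have hc'lt : c' < c := by nlinarith
      obtain ⟨V, hV, hVeq⟩ := ih (2*a + c').toNat (by omega) a b' c' le_rfl ha hc'pos hdet'
      refine ⟨!![1,t;0,1] * V, ?_, ?_⟩
      · rw [Matrix.det_mul]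
        exact (by simp [Matrix.det_fin_two_of] : IsUnit (!![(1:ℤ),t;0,1]).det).mul hV
      · refine comp_conj _ !![2*a, b'; b', 2*c'] _ _ _ ?_ hVeq
        have := conj_fin_two 1 t 0 1 a b c
        rw [this, hb', hc']
        ext i j; fin_cases i <;> fin_cases j <;> simp <;> ring
    · -- a > c : swap
      push_neg at hac
      obtain ⟨V, hV, hVeq⟩ := ih (2*c + a).toNat (by omega) c b a le_rfl hc ha (by linarith)
      refine ⟨!![0,1;1,0] * V, ?_, ?_⟩
      · rw [Matrix.det_mul]
        exact (by simp [Matrix.det_fin_two_of] : IsUnit (!![(0:ℤ),1;1,0]).det).mul hV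
      · refine comp_conj _ !![2*c, b; b, 2*a] _ _ _ ?_ hVeq
        have := conj_fin_two 0 1 1 0 a b c
        rw [this]
        ext i j; fin_cases i <;> fin_cases j <;> simp

/-- Any even positive definite rank-2 lattice of determinant 11, presented by its Gram
matrix, is isomorphic to the lattice with Gram matrix `!![2,1;1,6]`. -/
theorem rank_two_det_eleven_lattice
    (G : Matrix (Fin 2) (Fin 2) ℤ) (hsymm : G.IsSymm)
    (heven : ∀ i, Even (G i i))
    (hpos : ∀ v : Fin 2 → ℤ, v ≠ 0 → 0 < v ⬝ᵥ (G.mulVec v))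
    (hdet : G.det = 11) :
    ∃ U : Matrix (Fin 2) (Fin 2) ℤ, IsUnit U.det ∧ Uᵀ * G * U = !![2, 1; 1, 6] := by
  obtain ⟨a, ha⟩ := heven 0
  obtain ⟨c, hcc⟩ := heven 1
  have hsym : G 1 0 = G 0 1 := by
    have := congrFun (congrFun hsymm 0) 1
    simpa [Matrix.transpose_apply] using this
  set b : ℤ := G 0 1 with hb
  have hG : G = !![2*a, b; b, 2*c] := by
    rw [Matrix.eta_fin_two G]
    ext i j; fin_cases i <;> fin_cases j <;> simp [hb] <;> omega
  have hapos : 0 < a := by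
    have := hpos ![1,0] (by intro h; simpa using congrFun h 0)
    rw [hG] at this
    simp [Matrix.mulVec, dotProduct, Fin.sum_univ_two] at this
    omega
  have hcpos : 0 < c := by
    have := hpos ![0,1] (by intro h; simpa using congrFun h 1)
    rw [hG] at this
    simp [Matrix.mulVec, dotProduct, Fin.sum_univ_two] at this
    omega
  have hd : 4*a*c - b^2 = 11 := by
    rw [hG] at hdet
    simp [Matrix.det_fin_two_of] at hdet
    ring_nf
    ring_nf at hdet
    linarith
  rw [hG]
  exact key (2*a+c).toNat a b c le_rfl hapos hcpos hd
end

section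
/- The rank-3 lattices with Gram matrices [[2,1,0],[1,2,1],[0,1,8]] and diag-block L_11 ⊕ (2) where L_11 = [[2,1],[1,6]] are both even, positive definite, and of determinant 22, but they are not isomorphic as lattices. -/
open Matrix

/-- The Gram matrix `[[2,1,0],[1,2,1],[0,1,8]]`. -/
def G₁ : Matrix (Fin 3) (Fin 3) ℤ := !![2, 1, 0; 1, 2, 1; 0, 1, 8]

/-- The Gram matrix of `L₁₁ ⊕ (2)` where `L₁₁ = [[2,1],[1,6]]`. -/
def G₂ : Matrix (Fin 3) (Fin 3) ℤ := !![2, 1, 0; 1, 6, 0; 0, 0, 2]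

lemma G1_quad (v : Fin 3 → ℤ) :
    v ⬝ᵥ G₁.mulVec v =
      2*v 0*v 0 + 2*v 0*v 1 + 2*v 1*v 1 + 2*v 1*v 2 + 8*v 2*v 2 := by
  simp [G₁, mulVec, dotProduct, Fin.sum_univ_three]; ring

lemma G2_quad (v : Fin 3 → ℤ) :
    v ⬝ᵥ G₂.mulVec v = 2*v 0*v 0 + 2*v 0*v 1 + 6*v 1*v 1 + 2*v 2*v 2 := by
  simp [G₂, mulVec, dotProduct, Fin.sum_univ_three]; ring

lemma G2_bilin (v w : Fin 3 → ℤ) :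
    v ⬝ᵥ G₂.mulVec w =
      2*v 0*w 0 + v 0*w 1 + v 1*w 0 + 6*v 1*w 1 + 2*v 2*w 2 := by
  simp [G₂, mulVec, dotProduct, Fin.sum_univ_three]; ring

lemma transfer (A B U : Matrix (Fin 3) (Fin 3) ℤ) (x y : Fin 3 → ℤ)
    (h : Uᵀ * A * U = B) :
    x ⬝ᵥ B.mulVec y = (U.mulVec x) ⬝ᵥ A.mulVec (U.mulVec y) := by
  rw [← h, ← mulVec_mulVec, ← mulVec_mulVec, dotProduct_mulVec, vecMul_transpose]

/-- Any vector of `G₂`-norm 2 has vanishing middle coordinate. -/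
lemma norm_two_middle (v : Fin 3 → ℤ) (h : v ⬝ᵥ G₂.mulVec v = 2) : v 1 = 0 := by
  rw [G2_quad] at h
  have h1 : v 1 ^ 2 ≤ 0 := by
    nlinarith [sq_nonneg (2 * v 0 + v 1), sq_nonneg (v 2), sq_nonneg (v 1)]
  have := sq_nonneg (v 1)
  nlinarith [sq_nonneg (v 1)]

theorem two_rank_three_lattices_not_isomorphic :
    (∀ i, Even (G₁ i i)) ∧ (∀ i, Even (G₂ i i)) ∧
    (∀ v : Fin 3 → ℤ, v ≠ 0 → 0 < v ⬝ᵥ G₁.mulVec v) ∧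
    (∀ v : Fin 3 → ℤ, v ≠ 0 → 0 < v ⬝ᵥ G₂.mulVec v) ∧
    G₁.det = 22 ∧ G₂.det = 22 ∧
    ¬ ∃ U : Matrix (Fin 3) (Fin 3) ℤ, IsUnit U.det ∧ Uᵀ * G₁ * U = G₂ := by
  refine ⟨?_, ?_, ?_, ?_, ?_, ?_, ?_⟩
  · intro i; fin_cases i <;> simp [G₁] <;> decide
  · intro i; fin_cases i <;> simp [G₂] <;> decide
  · intro v hv
    rw [G1_quad]
    by_contra h
    push_neg at h
    apply hv
    have h2 : v 2 = 0 := by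
      have : v 2 ^ 2 ≤ 0 := by
        nlinarith [sq_nonneg (v 0), sq_nonneg (v 0 + v 1), sq_nonneg (v 1 + v 2)]
      nlinarith [sq_nonneg (v 2)]
    have h0 : v 0 = 0 := by
      have : v 0 ^ 2 ≤ 0 := by
        nlinarith [sq_nonneg (v 0 + v 1), sq_nonneg (v 1 + v 2), sq_nonneg (v 2)]
      nlinarith [sq_nonneg (v 0)]
    have h1 : v 1 = 0 := by nlinarith [sq_nonneg (v 1)]
    funext i; fin_cases i <;> assumption
  · intro v hv
    rw [G2_quad]
    by_contra h
    push_neg at h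
    apply hv
    have h2 : v 2 = 0 := by
      have : v 2 ^ 2 ≤ 0 := by
        nlinarith [sq_nonneg (v 0), sq_nonneg (v 0 + v 1), sq_nonneg (v 1)]
      nlinarith [sq_nonneg (v 2)]
    have h1 : v 1 = 0 := by
      have : v 1 ^ 2 ≤ 0 := by
        nlinarith [sq_nonneg (v 0 + v 1), sq_nonneg (v 0), sq_nonneg (v 2)]
      nlinarith [sq_nonneg (v 1)]
    have h0 : v 0 = 0 := by nlinarith [sq_nonneg (v 0)]
    funext i; fin_cases i <;> assumption
  · simp [G₁, Matrix.det_fin_three]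
  · simp [G₂, Matrix.det_fin_three]
  · rintro ⟨U, hU, hEq⟩
    set v : Fin 3 → ℤ := U⁻¹.mulVec ![1, 0, 0] with hv
    set w : Fin 3 → ℤ := U⁻¹.mulVec ![0, 1, 0] with hw
    have hUv : U.mulVec v = ![1, 0, 0] := by
      rw [hv, mulVec_mulVec, Matrix.mul_nonsing_inv U hU, one_mulVec]
    have hUw : U.mulVec w = ![0, 1, 0] := by
      rw [hw, mulVec_mulVec, Matrix.mul_nonsing_inv U hU, one_mulVec]
    have hvv : v ⬝ᵥ G₂.mulVec v = 2 := by
      rw [transfer G₁ G₂ U v v hEq, hUv]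
      simp [G₁, mulVec, dotProduct, Fin.sum_univ_three]
    have hww : w ⬝ᵥ G₂.mulVec w = 2 := by
      rw [transfer G₁ G₂ U w w hEq, hUw]
      simp [G₁, mulVec, dotProduct, Fin.sum_univ_three]
    have hvw : v ⬝ᵥ G₂.mulVec w = 1 := by
      rw [transfer G₁ G₂ U v w hEq, hUv, hUw]
      simp [G₁, mulVec, dotProduct, Fin.sum_univ_three]
    have hv1 : v 1 = 0 := norm_two_middle v hvv
    have hw1 : w 1 = 0 := norm_two_middle w hww
    rw [G2_bilin, hv1, hw1] at hvw
    have : (2:ℤ) ∣ 1 := ⟨v 0 * w 0 + v 2 * w 2, by linarith [hvw]⟩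
    norm_num at this
end
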